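/- arXiv:2501.12867 — 4 statements merged into one kernel-verified Lean document; each statement's English description precedes it below -/
import Mathlib

section
/- Let μ be a probability measure on ℝ^d, let V ∈ St(d,r) and W ∈ St(d,d−r) satisfy V Vᵀ + W Wᵀ = I_d, and let f : ℝ^d → ℝ be continuously differentiable with f and ‖∇f‖ square-integrable with respect to μ. Let μ_V be the pushforward of μ under y ↦ Vᵀy and let (μ_{Z|X}(·|x))_{x} be a disintegration (conditional distribution) of the pushforward of μ under y ↦ (Vᵀy, Wᵀy) with respect to its first marginal. Suppose there is a constant C_P > 0 such that for μ_V-a.e. x and every continuously differentiable h : ℝ^{d−r} → ℝ with h and ‖∇h‖ square-integrable against μ_{Z|X}(·|x) and ∫ h dμ_{Z|X}(·|x) = 0, one has (∫ h(z)² dμ_{Z|X}(dz|x))^{1/2} ≤ C_P (∫ ‖∇h(z)‖² dμ_{Z|X}(dz|x))^{1/2}. Define g⋆(x) := ∫ f(Vx + Wz) μ_{Z|X}(dz|x). Then ‖f − g⋆ ∘ (Vᵀ·)‖_{L²(μ)} ≤ C_P ‖(I_d − V Vᵀ)∇f‖_{L²(μ;ℝ^d)}. -/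
/-!
Write `y = V x + W z` with `(x, z) = (Vᵀ y, Wᵀ y)`. By the disintegration, the squared error
`∫ (f - g⋆ ∘ Vᵀ)²` is the `μ_V`-average of the variances of the fibre functions
`z ↦ f (V x + W z)` under `κ x`, whose means are `g⋆ x`. The fibrewise Poincaré inequality bounds
each variance by `C_P²` times the `κ x`-average of `‖Wᵀ ∇f‖²`, and `‖Wᵀ ∇f‖ = ‖(I - V Vᵀ) ∇f‖`
since `V Vᵀ + W Wᵀ = I` and `Wᵀ W = I`. The argument runs through lower Lebesgue integrals, so
square integrability of `g⋆ ∘ Vᵀ` is never needed.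
-/

open MeasureTheory ProbabilityTheory Matrix
open scoped ProbabilityTheory

noncomputable section

/-- The gradient of `f : ℝ^d → ℝ` at `y`, as the vector of partial derivatives. -/
def grad {d : ℕ} (f : (Fin d → ℝ) → ℝ) (y : Fin d → ℝ) : Fin d → ℝ :=
  fun i => fderiv ℝ f y (Pi.single i 1)

/-- Squared Euclidean norm on `ℝ^d`. -/
def sqnorm {d : ℕ} (v : Fin d → ℝ) : ℝ := ∑ i, v i ^ 2

theorem sqnorm_eq_dotProduct {d : ℕ} (v : Fin d → ℝ) : sqnorm v = v ⬝ᵥ v := by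
  simp [sqnorm, dotProduct, sq]

theorem sqnorm_nonneg {d : ℕ} (v : Fin d → ℝ) : 0 ≤ sqnorm v :=
  Finset.sum_nonneg fun _ _ => sq_nonneg _

theorem continuous_sqnorm {d : ℕ} : Continuous (sqnorm (d := d)) := by
  unfold sqnorm; fun_prop

theorem sqnorm_transpose_mulVec {d k : ℕ} (M : Matrix (Fin d) (Fin k) ℝ) (v : Fin d → ℝ) :
    sqnorm (Mᵀ *ᵥ v) = v ⬝ᵥ (M * Mᵀ) *ᵥ v := by
  rw [sqnorm_eq_dotProduct, ← mulVec_mulVec, dotProduct_mulVec v, ← mulVec_transpose]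

theorem sqnorm_mulVec_of_transpose_mul_self {d k : ℕ} {M : Matrix (Fin d) (Fin k) ℝ}
    (hM : Mᵀ * M = 1) (u : Fin k → ℝ) : sqnorm (M *ᵥ u) = sqnorm u := by
  rw [← transpose_transpose M, sqnorm_transpose_mulVec, transpose_transpose, hM, one_mulVec,
    sqnorm_eq_dotProduct]

section Complement

variable {d r s : ℕ} {V : Matrix (Fin d) (Fin r) ℝ} {W : Matrix (Fin d) (Fin s) ℝ}

theorem mulVec_transpose_mulVec_add (hVW : V * Vᵀ + W * Wᵀ = 1) (y : Fin d → ℝ) :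
    V *ᵥ (Vᵀ *ᵥ y) + W *ᵥ (Wᵀ *ᵥ y) = y := by
  rw [mulVec_mulVec, mulVec_mulVec, ← add_mulVec, hVW, one_mulVec]

theorem sqnorm_eq_add_of_complement (hVW : V * Vᵀ + W * Wᵀ = 1) (v : Fin d → ℝ) :
    sqnorm v = sqnorm (Vᵀ *ᵥ v) + sqnorm (Wᵀ *ᵥ v) := by
  rw [sqnorm_transpose_mulVec, sqnorm_transpose_mulVec, ← dotProduct_add, ← add_mulVec, hVW,
    one_mulVec, sqnorm_eq_dotProduct]

theorem sqnorm_transpose_mulVec_le (hVW : V * Vᵀ + W * Wᵀ = 1) (v : Fin d → ℝ) :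
    sqnorm (Wᵀ *ᵥ v) ≤ sqnorm v := by
  rw [sqnorm_eq_add_of_complement hVW v]
  exact le_add_of_nonneg_left (sqnorm_nonneg _)

theorem sqnorm_one_sub_mulVec (hW : Wᵀ * W = 1) (hVW : V * Vᵀ + W * Wᵀ = 1)
    (v : Fin d → ℝ) : sqnorm ((1 - V * Vᵀ) *ᵥ v) = sqnorm (Wᵀ *ᵥ v) := by
  rw [← hVW, add_sub_cancel_left, ← mulVec_mulVec, sqnorm_mulVec_of_transpose_mul_self hW]

end Complement

theorem fderiv_apply_eq_dotProduct_grad {d : ℕ} (f : (Fin d → ℝ) → ℝ) (y v : Fin d → ℝ) :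
    fderiv ℝ f y v = v ⬝ᵥ grad f y := by
  classical
  conv_lhs => rw [← Finset.univ_sum_single v]
  simp only [map_sum, dotProduct, grad]
  refine Finset.sum_congr rfl fun j _ => ?_
  rw [← smul_eq_mul, ← map_smul, ← Pi.single_smul, smul_eq_mul, mul_one]

theorem grad_comp_add_mulVec {d s : ℕ} {f : (Fin d → ℝ) → ℝ} (hf : Differentiable ℝ f)
    (c : Fin d → ℝ) (W : Matrix (Fin d) (Fin s) ℝ) (z : Fin s → ℝ) :
    grad (fun z => f (c + W *ᵥ z)) z = Wᵀ *ᵥ grad f (c + W *ᵥ z) := by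
  have hA : HasFDerivAt (fun z => c + W *ᵥ z) (mulVecLin W).toContinuousLinearMap z :=
    ((mulVecLin W).toContinuousLinearMap.hasFDerivAt).const_add c
  have hcomp : HasFDerivAt (fun z => f (c + W *ᵥ z))
      ((fderiv ℝ f (c + W *ᵥ z)).comp (mulVecLin W).toContinuousLinearMap) z :=
    (hf _).hasFDerivAt.comp z hA
  ext i
  rw [grad, hcomp.fderiv, ContinuousLinearMap.comp_apply, LinearMap.coe_toContinuousLinearMap',
    mulVecLin_apply, mulVec_single_one, fderiv_apply_eq_dotProduct_grad]
  rfl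

theorem grad_sub_const {d : ℕ} (u : (Fin d → ℝ) → ℝ) (a : ℝ) :
    grad (fun z => u z - a) = grad u := by
  ext y
  simp only [grad, fderiv_sub_const]

theorem measurable_grad {d : ℕ} (f : (Fin d → ℝ) → ℝ) : Measurable (grad f) :=
  measurable_pi_lambda _ fun _ => measurable_fderiv_apply_const ℝ f _

def PoincareInequality {s : ℕ} (ν : Measure (Fin s → ℝ)) (C : ℝ) : Prop :=
  ∀ h : (Fin s → ℝ) → ℝ, ContDiff ℝ 1 h → MemLp h 2 ν →
    Integrable (fun z => sqnorm (grad h z)) ν → ∫ z, h z ∂ν = 0 →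
    Real.sqrt (∫ z, h z ^ 2 ∂ν) ≤ C * Real.sqrt (∫ z, sqnorm (grad h z) ∂ν)

theorem PoincareInequality.lintegral_sq_sub_integral_le {s : ℕ} {ν : Measure (Fin s → ℝ)}
    [IsProbabilityMeasure ν] {C : ℝ} (hP : PoincareInequality ν C) {u : (Fin s → ℝ) → ℝ}
    (hu : ContDiff ℝ 1 u) (hu2 : MemLp u 2 ν)
    (hgrad : Integrable (fun z => sqnorm (grad u z)) ν) :
    ∫⁻ z, ENNReal.ofReal ((u z - ∫ w, u w ∂ν) ^ 2) ∂ν ≤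
      ENNReal.ofReal (C ^ 2) * ∫⁻ z, ENNReal.ofReal (sqnorm (grad u z)) ∂ν := by
  have hmean : ∫ z, (u z - ∫ w, u w ∂ν) ∂ν = 0 := by
    rw [integral_sub (hu2.integrable one_le_two) (integrable_const _), integral_const,
      probReal_univ, one_smul, sub_self]
  have hvar : MemLp (fun z => u z - ∫ w, u w ∂ν) 2 ν := hu2.sub (memLp_const _)
  have h := hP _ (hu.sub contDiff_const) hvar (by rwa [grad_sub_const]) hmean
  rw [grad_sub_const, Real.sqrt_le_iff, mul_pow,
    Real.sq_sqrt (integral_nonneg fun _ => sqnorm_nonneg _)] at h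
  rw [← ofReal_integral_eq_lintegral_ofReal hvar.integrable_sq (ae_of_all _ fun _ => sq_nonneg _),
    ← ofReal_integral_eq_lintegral_ofReal hgrad (ae_of_all _ fun _ => sqnorm_nonneg _),
    ← ENNReal.ofReal_mul (sq_nonneg C)]
  exact ENNReal.ofReal_le_ofReal h.2

theorem PoincareInequality.lintegral_sq_sub_integral_comp_add_mulVec_le {d s : ℕ}
    {ν : Measure (Fin s → ℝ)} [IsProbabilityMeasure ν] {C : ℝ} (hP : PoincareInequality ν C)
    {f : (Fin d → ℝ) → ℝ} (hf : ContDiff ℝ 1 f) (c : Fin d → ℝ) (W : Matrix (Fin d) (Fin s) ℝ)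
    (hf2 : Integrable (fun z => f (c + W *ᵥ z) ^ 2) ν)
    (hgrad : Integrable (fun z => sqnorm (Wᵀ *ᵥ grad f (c + W *ᵥ z))) ν) :
    ∫⁻ z, ENNReal.ofReal ((f (c + W *ᵥ z) - ∫ w, f (c + W *ᵥ w) ∂ν) ^ 2) ∂ν ≤
      ENNReal.ofReal (C ^ 2) * ∫⁻ z, ENNReal.ofReal (sqnorm (Wᵀ *ᵥ grad f (c + W *ᵥ z))) ∂ν := by
  have hu : ContDiff ℝ 1 fun z => f (c + W *ᵥ z) :=
    hf.comp (contDiff_const.add (mulVecLin W).toContinuousLinearMap.contDiff)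
  have hu2 : MemLp (fun z => f (c + W *ᵥ z)) 2 ν :=
    (memLp_two_iff_integrable_sq hu.continuous.aestronglyMeasurable).mpr hf2
  have hgradu := grad_comp_add_mulVec (hf.differentiable one_ne_zero) c W
  simpa only [hgradu] using hP.lintegral_sq_sub_integral_le hu hu2 (by simpa only [hgradu])

section Disintegration

variable {α β γ : Type*} [MeasurableSpace α] [MeasurableSpace β] [MeasurableSpace γ]
  {μ : Measure α} {ρ : Measure β} [SFinite ρ] {κ : Kernel β γ} [IsSFiniteKernel κ]
  {T : α → β × γ}

theorem lintegral_comp_of_map_eq_compProd (hT : Measurable T) (hdis : μ.map T = ρ ⊗ₘ κ)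
    {φ : β × γ → ENNReal} (hφ : Measurable φ) :
    ∫⁻ y, φ (T y) ∂μ = ∫⁻ x, ∫⁻ z, φ (x, z) ∂κ x ∂ρ := by
  rw [← lintegral_map hφ hT, hdis, Measure.lintegral_compProd hφ]

theorem ae_integrable_slice_of_map_eq_compProd (hT : Measurable T) (hdis : μ.map T = ρ ⊗ₘ κ)
    {g : β × γ → ℝ} (hg : StronglyMeasurable g) (hgT : Integrable (fun y => g (T y)) μ) :
    ∀ᵐ x ∂ρ, Integrable (fun z => g (x, z)) (κ x) := by
  have hgρκ : Integrable g (ρ ⊗ₘ κ) := by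
    rwa [← hdis, integrable_map_measure hg.aestronglyMeasurable hT.aemeasurable]
  exact ((Measure.integrable_compProd_iff hg.aestronglyMeasurable).mp hgρκ).1

end Disintegration

theorem integral_le_mul_integral_of_lintegral_ofReal_le {α : Type*} [MeasurableSpace α]
    {μ : Measure α} {u v : α → ℝ} {c : ℝ} (hu : 0 ≤ u) (hv : 0 ≤ v) (hvi : Integrable v μ)
    (hc : 0 ≤ c)
    (h : ∫⁻ x, ENNReal.ofReal (u x) ∂μ ≤ ENNReal.ofReal c * ∫⁻ x, ENNReal.ofReal (v x) ∂μ) :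
    ∫ x, u x ∂μ ≤ c * ∫ x, v x ∂μ := by
  have hcv : 0 ≤ c * ∫ x, v x ∂μ := mul_nonneg hc (integral_nonneg hv)
  by_cases hui : Integrable u μ
  · rw [← ofReal_integral_eq_lintegral_ofReal hui (ae_of_all _ hu),
      ← ofReal_integral_eq_lintegral_ofReal hvi (ae_of_all _ hv), ← ENNReal.ofReal_mul hc] at h
    exact (ENNReal.ofReal_le_ofReal_iff hcv).mp h
  · rwa [integral_undef hui]

theorem lintegral_sq_sub_conditional_mean_le {d r s : ℕ} {μ : Measure (Fin d → ℝ)}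
    [IsProbabilityMeasure μ] {V : Matrix (Fin d) (Fin r) ℝ} {W : Matrix (Fin d) (Fin s) ℝ}
    (hVW : V * Vᵀ + W * Wᵀ = 1) {f : (Fin d → ℝ) → ℝ} (hf : ContDiff ℝ 1 f)
    (hfL2 : MemLp f 2 μ) (hgrad : Integrable (fun y => sqnorm (Wᵀ *ᵥ grad f y)) μ)
    {κ : Kernel (Fin r → ℝ) (Fin s → ℝ)} [IsMarkovKernel κ]
    (hdis : μ.map (fun y => (Vᵀ *ᵥ y, Wᵀ *ᵥ y)) = (μ.map (Vᵀ *ᵥ ·)) ⊗ₘ κ) {C : ℝ}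
    (hP : ∀ᵐ x ∂(μ.map (Vᵀ *ᵥ ·)), PoincareInequality (κ x) C) :
    ∫⁻ y, ENNReal.ofReal ((f y - ∫ z, f (V *ᵥ (Vᵀ *ᵥ y) + W *ᵥ z) ∂κ (Vᵀ *ᵥ y)) ^ 2) ∂μ ≤
      ENNReal.ofReal (C ^ 2) * ∫⁻ y, ENNReal.ofReal (sqnorm (Wᵀ *ᵥ grad f y)) ∂μ := by
  set T := fun y => (Vᵀ *ᵥ y, Wᵀ *ᵥ y)
  set F : (Fin r → ℝ) × (Fin s → ℝ) → ℝ := fun p => f (V *ᵥ p.1 + W *ᵥ p.2)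
  set G : (Fin r → ℝ) × (Fin s → ℝ) → ℝ := fun p => sqnorm (Wᵀ *ᵥ grad f (V *ᵥ p.1 + W *ᵥ p.2))
  have hT : Measurable T := by fun_prop
  have hFc : Continuous F := by have := hf.continuous; fun_prop
  have hGm : Measurable G :=
    ((continuous_sqnorm.comp (by fun_prop)).measurable.comp (measurable_grad f)).comp
      (by fun_prop)
  have hFT : ∀ y, F (T y) = f y := fun y => congrArg f (mulVec_transpose_mulVec_add hVW y)
  have hGT : ∀ y, G (T y) = sqnorm (Wᵀ *ᵥ grad f y) := fun y => by
    simp only [G, T, mulVec_transpose_mulVec_add hVW y]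
  have hF2 : ∀ᵐ x ∂(μ.map (Vᵀ *ᵥ ·)), Integrable (fun z => F (x, z) ^ 2) (κ x) :=
    ae_integrable_slice_of_map_eq_compProd (g := fun p => F p ^ 2) hT hdis
      (hFc.pow 2).stronglyMeasurable (by simpa only [hFT] using hfL2.integrable_sq)
  have hG : ∀ᵐ x ∂(μ.map (Vᵀ *ᵥ ·)), Integrable (fun z => G (x, z)) (κ x) :=
    ae_integrable_slice_of_map_eq_compProd hT hdis hGm.stronglyMeasurable
      (by simpa only [hGT] using hgrad)
  have hmean : Measurable fun x => ∫ z, F (x, z) ∂κ x :=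
    hFc.stronglyMeasurable.integral_kernel_prod_right'.measurable
  have hφ : Measurable fun p => ENNReal.ofReal ((F p - ∫ w, F (p.1, w) ∂κ p.1) ^ 2) :=
    ENNReal.measurable_ofReal.comp ((hFc.measurable.sub (hmean.comp measurable_fst)).pow_const 2)
  calc ∫⁻ y, ENNReal.ofReal ((f y - ∫ z, f (V *ᵥ (Vᵀ *ᵥ y) + W *ᵥ z) ∂κ (Vᵀ *ᵥ y)) ^ 2) ∂μ
      = ∫⁻ x, ∫⁻ z, ENNReal.ofReal ((F (x, z) - ∫ w, F (x, w) ∂κ x) ^ 2) ∂κ x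
          ∂(μ.map (Vᵀ *ᵥ ·)) := by
        refine Eq.trans ?_ (lintegral_comp_of_map_eq_compProd hT hdis hφ)
        simp only [hFT]
        rfl
    _ ≤ ∫⁻ x, ENNReal.ofReal (C ^ 2) * ∫⁻ z, ENNReal.ofReal (G (x, z)) ∂κ x
          ∂(μ.map (Vᵀ *ᵥ ·)) := by
        refine lintegral_mono_ae ?_
        filter_upwards [hP, hF2, hG] with x hPx hF2x hGx
        exact hPx.lintegral_sq_sub_integral_comp_add_mulVec_le hf (V *ᵥ x) W hF2x hGx
    _ = ENNReal.ofReal (C ^ 2) * ∫⁻ y, ENNReal.ofReal (sqnorm (Wᵀ *ᵥ grad f y)) ∂μ := by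
        rw [lintegral_const_mul' _ _ ENNReal.ofReal_ne_top,
          ← lintegral_comp_of_map_eq_compProd hT hdis (φ := fun p => ENNReal.ofReal (G p))
            (by fun_prop)]
        simp only [hGT]

theorem active_subspace_error_bound_general
    {d r s : ℕ} (μ : Measure (Fin d → ℝ)) [IsProbabilityMeasure μ]
    (V : Matrix (Fin d) (Fin r) ℝ) (W : Matrix (Fin d) (Fin s) ℝ)
    (hW : Wᵀ * W = 1)
    (hVW : V * Vᵀ + W * Wᵀ = 1)
    (f : (Fin d → ℝ) → ℝ) (hf : ContDiff ℝ 1 f)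
    (hfL2 : MemLp f 2 μ)
    (hgradL2 : Integrable (fun y => sqnorm (grad f y)) μ)
    -- disintegration of the pushforward of μ under y ↦ (Vᵀy, Wᵀy) w.r.t. its first marginal
    (κ : Kernel (Fin r → ℝ) (Fin s → ℝ)) [IsMarkovKernel κ]
    (hdis : μ.map (fun y => (Vᵀ.mulVec y, Wᵀ.mulVec y)) = (μ.map (Vᵀ.mulVec ·)) ⊗ₘ κ)
    -- the sliced Poincaré inequality with constant C_P
    (CP : ℝ) (hCP : 0 < CP)
    (hPoincare : ∀ᵐ x ∂(μ.map (Vᵀ.mulVec ·)), ∀ h : (Fin s → ℝ) → ℝ,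
      ContDiff ℝ 1 h → MemLp h 2 (κ x) →
      Integrable (fun z => sqnorm (grad h z)) (κ x) →
      (∫ z, h z ∂(κ x)) = 0 →
      Real.sqrt (∫ z, (h z) ^ 2 ∂(κ x)) ≤
        CP * Real.sqrt (∫ z, sqnorm (grad h z) ∂(κ x)))
    -- the conditional average g⋆
    (gstar : (Fin r → ℝ) → ℝ)
    (hgstar : ∀ x, gstar x = ∫ z, f (V.mulVec x + W.mulVec z) ∂(κ x)) :
    Real.sqrt (∫ y, (f y - gstar (Vᵀ.mulVec y)) ^ 2 ∂μ) ≤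
      CP * Real.sqrt (∫ y, sqnorm (((1 : Matrix (Fin d) (Fin d) ℝ) - V * Vᵀ).mulVec (grad f y)) ∂μ) := by
  have hgrad : Integrable (fun y => sqnorm (Wᵀ *ᵥ grad f y)) μ :=
    hgradL2.mono' ((continuous_sqnorm.comp (by fun_prop)).measurable.comp
      (measurable_grad f)).aestronglyMeasurable
      (ae_of_all _ fun y => by
        rw [Real.norm_of_nonneg (sqnorm_nonneg _)]
        exact sqnorm_transpose_mulVec_le hVW _)
  have hL := lintegral_sq_sub_conditional_mean_le hVW hf hfL2 hgrad hdis hPoincare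
  simp_rw [← hgstar] at hL
  have hle := integral_le_mul_integral_of_lintegral_ofReal_le (fun _ => sq_nonneg _)
    (fun _ => sqnorm_nonneg _) hgrad (sq_nonneg CP) hL
  simp_rw [sqnorm_one_sub_mulVec hW hVW]
  calc Real.sqrt (∫ y, (f y - gstar (Vᵀ *ᵥ y)) ^ 2 ∂μ)
      ≤ Real.sqrt (CP ^ 2 * ∫ y, sqnorm (Wᵀ *ᵥ grad f y) ∂μ) := Real.sqrt_le_sqrt hle
    _ = CP * Real.sqrt (∫ y, sqnorm (Wᵀ *ᵥ grad f y) ∂μ) := by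
      rw [Real.sqrt_mul (sq_nonneg CP), Real.sqrt_sq hCP.le]

/-- the active subspace (sliced Poincaré) error bound
`‖f − g⋆ ∘ (Vᵀ·)‖_{L²(μ)} ≤ C_P ‖(I − V Vᵀ)∇f‖_{L²(μ;ℝ^d)}`. -/
theorem active_subspace_error_bound
    {d r s : ℕ} (μ : Measure (Fin d → ℝ)) [IsProbabilityMeasure μ]
    (V : Matrix (Fin d) (Fin r) ℝ) (W : Matrix (Fin d) (Fin s) ℝ)
    (hV : Vᵀ * V = 1) (hW : Wᵀ * W = 1)
    (hVW : V * Vᵀ + W * Wᵀ = 1)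
    (f : (Fin d → ℝ) → ℝ) (hf : ContDiff ℝ 1 f)
    (hfL2 : MemLp f 2 μ)
    (hgradL2 : Integrable (fun y => sqnorm (grad f y)) μ)
    -- disintegration of the pushforward of μ under y ↦ (Vᵀy, Wᵀy) w.r.t. its first marginal
    (κ : Kernel (Fin r → ℝ) (Fin s → ℝ)) [IsMarkovKernel κ]
    (hdis : μ.map (fun y => (Vᵀ.mulVec y, Wᵀ.mulVec y)) = (μ.map (Vᵀ.mulVec ·)) ⊗ₘ κ)
    -- the sliced Poincaré inequality with constant C_P
    (CP : ℝ) (hCP : 0 < CP)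
    (hPoincare : ∀ᵐ x ∂(μ.map (Vᵀ.mulVec ·)), ∀ h : (Fin s → ℝ) → ℝ,
      ContDiff ℝ 1 h → MemLp h 2 (κ x) →
      Integrable (fun z => sqnorm (grad h z)) (κ x) →
      (∫ z, h z ∂(κ x)) = 0 →
      Real.sqrt (∫ z, (h z) ^ 2 ∂(κ x)) ≤
        CP * Real.sqrt (∫ z, sqnorm (grad h z) ∂(κ x)))
    -- the conditional average g⋆
    (gstar : (Fin r → ℝ) → ℝ)
    (hgstar : ∀ x, gstar x = ∫ z, f (V.mulVec x + W.mulVec z) ∂(κ x)) :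
    Real.sqrt (∫ y, (f y - gstar (Vᵀ.mulVec y)) ^ 2 ∂μ) ≤
      CP * Real.sqrt (∫ y, sqnorm (((1 : Matrix (Fin d) (Fin d) ℝ) - V * Vᵀ).mulVec (grad f y)) ∂μ) :=
  active_subspace_error_bound_general μ V W hW hVW f hf hfL2 hgradL2 κ hdis CP hCP hPoincare gstar
    hgstar

end
end

section
/- Let μ be a probability measure on a measurable space Γ and let φ_1,…,φ_m be an orthonormal system in L²(μ) such that for μ-a.e. y it holds ∑_{j=1}^m φ_j(y)² > 0. Define the measure ν⋆ by dν⋆/dμ := (1/m) ∑_{j=1}^m φ_j². Then ν⋆ is a probability measure, μ is absolutely continuous with respect to ν⋆ with w⋆ := dμ/dν⋆ = m / ∑_{j=1}^m φ_j² (ν⋆-a.e.), and the function k_{m,w⋆}(y) := w⋆(y) ∑_{j=1}^m φ_j(y)² equals m identically ν⋆-a.e.; in particular K_{m,w⋆} := ess-sup_{ν⋆} k_{m,w⋆} = m, which is the minimal possible value of K_{m,w} over all probability measures ν with μ ≪ ν. -/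
open MeasureTheory
open scoped ENNReal

noncomputable section

/-!
Write `s = ∑ⱼ φⱼ²`. Orthonormality gives `∫ s dμ = m`, so `ν⋆ = (s / m) μ` is a probability
measure; as `s > 0` a.e., the density can be inverted and `dμ/dν⋆ = m / s`, whence
`w⋆ s = m` exactly. Conversely, for any `ν` with `μ ≪ ν`, the function `(dμ/dν) s` has
`ν`-integral `∫ s dμ = m`, and an average never exceeds an essential supremum.
-/

namespace MeasureTheory

variable {Γ : Type*} [MeasurableSpace Γ] {μ : Measure Γ}

theorem integral_sum_sq_eq_card {ι : Type*} [Fintype ι] {φ : ι → Γ → ℝ}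
    (hL2 : ∀ j, MemLp (φ j) 2 μ) (hnorm : ∀ j, ∫ y, φ j y ^ 2 ∂μ = 1) :
    ∫ y, ∑ j, φ j y ^ 2 ∂μ = Fintype.card ι := by
  rw [integral_finsetSum _ fun j _ => (hL2 j).integrable_sq]
  simp [hnorm]

theorem lintegral_ofReal_le_essSup_rnDeriv_mul [SigmaFinite μ] {ν : Measure Γ}
    [IsProbabilityMeasure ν] (hμν : μ ≪ ν) {s : Γ → ℝ} (hs : Measurable s) :
    ∫⁻ y, ENNReal.ofReal (s y) ∂μ
      ≤ essSup (fun y => ENNReal.ofReal ((μ.rnDeriv ν y).toReal * s y)) ν := by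
  have hmul : (fun y => μ.rnDeriv ν y * ENNReal.ofReal (s y))
      =ᵐ[ν] fun y => ENNReal.ofReal ((μ.rnDeriv ν y).toReal * s y) := by
    filter_upwards [μ.rnDeriv_lt_top ν] with y hy
    rw [ENNReal.ofReal_mul ENNReal.toReal_nonneg, ENNReal.ofReal_toReal hy.ne]
  calc ∫⁻ y, ENNReal.ofReal (s y) ∂μ
      = ∫⁻ y, μ.rnDeriv ν y * ENNReal.ofReal (s y) ∂ν :=
        (lintegral_rnDeriv_mul hμν hs.ennreal_ofReal.aemeasurable).symm
    _ = ⨍⁻ y, ENNReal.ofReal ((μ.rnDeriv ν y).toReal * s y) ∂ν := by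
        rw [laverage_eq_lintegral, lintegral_congr_ae hmul]
    _ ≤ _ := laverage_le_essSup _

theorem rnDeriv_withDensity_right_self [SigmaFinite μ] {f : Γ → ℝ≥0∞} (hf : Measurable f)
    (hf_ne_zero : ∀ᵐ x ∂μ, f x ≠ 0) (hf_ne_top : ∀ᵐ x ∂μ, f x ≠ ∞) :
    μ.rnDeriv (μ.withDensity f) =ᵐ[μ.withDensity f] fun x => (f x)⁻¹ := by
  have : SigmaFinite (μ.withDensity f) := .withDensity_of_ne_top hf_ne_top
  have h := (μ.withDensity f).rnDeriv_withDensity (f := fun x => (f x)⁻¹) hf.inv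
  rwa [withDensity_inv_same hf hf_ne_zero hf_ne_top] at h

section NormalizedDensity

variable {s : Γ → ℝ} {c : ℝ}

theorem isProbabilityMeasure_withDensity_ofReal_div (hs : Integrable s μ)
    (hs_nonneg : 0 ≤ᵐ[μ] s) (hc : ∫ y, s y ∂μ = c) (hc_ne_zero : c ≠ 0) :
    IsProbabilityMeasure (μ.withDensity fun y => ENNReal.ofReal (s y / c)) := by
  have hc_nonneg : 0 ≤ c := hc ▸ integral_nonneg_of_ae hs_nonneg
  constructor
  rw [withDensity_apply _ MeasurableSet.univ, Measure.restrict_univ,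
    ← ofReal_integral_eq_lintegral_ofReal (hs.div_const c)
      (hs_nonneg.mono fun y hy => div_nonneg hy hc_nonneg),
    integral_div, hc, div_self hc_ne_zero, ENNReal.ofReal_one]

variable [SigmaFinite μ]

theorem rnDeriv_withDensity_ofReal_div (hs : Measurable s) (hs_pos : ∀ᵐ y ∂μ, 0 < s y)
    (hc : 0 < c) :
    μ.rnDeriv (μ.withDensity fun y => ENNReal.ofReal (s y / c))
      =ᵐ[μ.withDensity fun y => ENNReal.ofReal (s y / c)] fun y => ENNReal.ofReal (c / s y) := by
  have hrn := rnDeriv_withDensity_right_self (μ := μ) (hs.div_const c).ennreal_ofReal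
    (hs_pos.mono fun y hy => by positivity) (ae_of_all _ fun _ => ENNReal.ofReal_ne_top)
  filter_upwards [hrn, (withDensity_absolutelyContinuous μ _).ae_le hs_pos] with y hy hy_pos
  rw [hy, ← ENNReal.ofReal_inv_of_pos (by positivity), inv_div]

theorem rnDeriv_withDensity_ofReal_div_toReal_mul (hs : Measurable s)
    (hs_pos : ∀ᵐ y ∂μ, 0 < s y) (hc : 0 < c) :
    (fun y => ((μ.rnDeriv (μ.withDensity fun y => ENNReal.ofReal (s y / c))) y).toReal * s y)
      =ᵐ[μ.withDensity fun y => ENNReal.ofReal (s y / c)] fun _ => c := by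
  filter_upwards [rnDeriv_withDensity_ofReal_div hs hs_pos hc,
    (withDensity_absolutelyContinuous μ _).ae_le hs_pos] with y hy hy_pos
  rw [hy, ENNReal.toReal_ofReal (by positivity), div_mul_cancel₀ _ hy_pos.ne']

end NormalizedDensity

end MeasureTheory

/-- the optimal sampling measure `dν⋆/dμ = (1/m) ∑_j φ_j²` is a
probability measure, `μ ≪ ν⋆` with `dμ/dν⋆ = m / ∑_j φ_j²`, the function
`k_{m,w⋆} = w⋆ ∑_j φ_j²` equals `m` identically `ν⋆`-a.e., hence
`K_{m,w⋆} = m`, which is the minimal possible value of `K_{m,w}` over all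
probability measures `ν` with `μ ≪ ν`. -/
theorem optimal_sampling_measure
    {Γ : Type*} [MeasurableSpace Γ] (μ : Measure Γ) [IsProbabilityMeasure μ]
    {m : ℕ} (hm : 0 < m) (φ : Fin m → Γ → ℝ) (hmeas : ∀ j, Measurable (φ j))
    (hL2 : ∀ j, MemLp (φ j) 2 μ)
    (hortho : ∀ i j, ∫ y, φ i y * φ j y ∂μ = if i = j then 1 else 0)
    (hpos : ∀ᵐ y ∂μ, 0 < ∑ j, φ j y ^ 2)
    (νstar : Measure Γ)
    (hνstar : νstar = μ.withDensity fun y => ENNReal.ofReal ((∑ j, φ j y ^ 2) / m)) :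
    IsProbabilityMeasure νstar ∧
    μ ≪ νstar ∧
    (μ.rnDeriv νstar =ᵐ[νstar] fun y => ENNReal.ofReal ((m : ℝ) / ∑ j, φ j y ^ 2)) ∧
    ((fun y => (μ.rnDeriv νstar y).toReal * ∑ j, φ j y ^ 2) =ᵐ[νstar] fun _ => (m : ℝ)) ∧
    essSup (fun y => ENNReal.ofReal ((μ.rnDeriv νstar y).toReal * ∑ j, φ j y ^ 2)) νstar
      = (m : ℝ≥0∞) ∧
    (∀ ν : Measure Γ, IsProbabilityMeasure ν → μ ≪ ν →
      (m : ℝ≥0∞) ≤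
        essSup (fun y => ENNReal.ofReal ((μ.rnDeriv ν y).toReal * ∑ j, φ j y ^ 2)) ν) := by
  have hm_pos : (0 : ℝ) < m := Nat.cast_pos.mpr hm
  have hs : Measurable fun y => ∑ j, φ j y ^ 2 :=
    Finset.measurable_sum _ fun j _ => (hmeas j).pow_const 2
  have hs_int : Integrable (fun y => ∑ j, φ j y ^ 2) μ :=
    integrable_finsetSum _ fun j _ => (hL2 j).integrable_sq
  have hs_nonneg : 0 ≤ᵐ[μ] fun y => ∑ j, φ j y ^ 2 :=
    ae_of_all _ fun y => Finset.sum_nonneg fun j _ => sq_nonneg _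
  have hs_integral : ∫ y, ∑ j, φ j y ^ 2 ∂μ = m := by
    simpa using integral_sum_sq_eq_card hL2 fun j => by simpa [sq] using hortho j j
  subst hνstar
  have hk := rnDeriv_withDensity_ofReal_div_toReal_mul hs hpos hm_pos
  have hprob :=
    isProbabilityMeasure_withDensity_ofReal_div hs_int hs_nonneg hs_integral hm_pos.ne'
  refine ⟨hprob, withDensity_absolutelyContinuous' (hs.div_const _).ennreal_ofReal.aemeasurable
    (hpos.mono fun y hy => by positivity), rnDeriv_withDensity_ofReal_div hs hpos hm_pos, hk,
    ?_, fun ν _ hμν => ?_⟩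
  · exact (essSup_congr_ae (hk.fun_comp ENNReal.ofReal)).trans
      ((essSup_const _ (NeZero.ne _)).trans (ENNReal.ofReal_natCast m))
  · calc (m : ℝ≥0∞) = ∫⁻ y, ENNReal.ofReal (∑ j, φ j y ^ 2) ∂μ := by
          rw [← ofReal_integral_eq_lintegral_ofReal hs_int hs_nonneg, hs_integral]; simp
      _ ≤ _ := lintegral_ofReal_le_essSup_rnDeriv_mul hμν hs

end
end

section
/- Let D be a nonempty set, let (ψ_j)_{j≥1} be real-valued functions on D, and let (ρ_j)_{j≥1} be positive numbers such that sup_{x∈D} ∑_{j≥1} ρ_j |ψ_j(x)| = K < ∞ and ∑_{j≥1} exp(−ρ_j²) < ∞. Let (Y_j)_{j≥1} be independent standard Gaussian random variables. Then almost surely sup_{x∈D} ∑_{j≥1} |Y_j ψ_j(x)| < ∞; in particular, almost surely the series b(x) := ∑_{j≥1} Y_j ψ_j(x) converges absolutely for every x ∈ D and sup_{x∈D} |b(x)| < ∞. -/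
open MeasureTheory ProbabilityTheory Filter Real
open scoped ENNReal NNReal

/-!
A standard Gaussian is sub-Gaussian, so `P(|Y_j| ≥ 2ρ_j) ≤ 2 exp(-2ρ_j²)`, which is summable.
By the Borel–Cantelli lemma, almost surely `|Y_j| < 2ρ_j` for all but finitely many `j`, hence
`|Y_j| ≤ M ρ_j` for all `j` with a random constant `M`, and then
`∑_j |Y_j ψ_j(x)| ≤ M ∑_j ρ_j |ψ_j(x)| ≤ M K` uniformly in `x`.
-/

lemma hasSubgaussianMGF_id_gaussianReal (v : ℝ≥0) :
    HasSubgaussianMGF id v (gaussianReal 0 v) where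
  integrable_exp_mul t := integrable_exp_mul_gaussianReal t
  mgf_le t := by simp [mgf_id_gaussianReal]

lemma ProbabilityTheory.HasSubgaussianMGF.measureReal_abs_ge_le {Ω : Type*} [MeasurableSpace Ω]
    {μ : Measure Ω} {X : Ω → ℝ} {c : ℝ≥0} (h : HasSubgaussianMGF X c μ) {ε : ℝ}
    (hε : 0 ≤ ε) :
    μ.real {ω | ε ≤ |X ω|} ≤ 2 * exp (-ε ^ 2 / (2 * c)) := by
  have hsplit : {ω | ε ≤ |X ω|} = {ω | ε ≤ X ω} ∪ {ω | ε ≤ (-X) ω} := by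
    ext ω
    simp [le_abs]
  calc μ.real {ω | ε ≤ |X ω|}
      ≤ μ.real {ω | ε ≤ X ω} + μ.real {ω | ε ≤ (-X) ω} :=
        hsplit ▸ measureReal_union_le _ _
    _ ≤ exp (-ε ^ 2 / (2 * c)) + exp (-ε ^ 2 / (2 * c)) :=
        add_le_add (h.measure_ge_le hε) (h.neg.measure_ge_le hε)
    _ = 2 * exp (-ε ^ 2 / (2 * c)) := by ring

lemma ae_eventually_abs_lt_of_hasSubgaussianMGF {Ω : Type*} [MeasurableSpace Ω]
    {μ : Measure Ω} [IsFiniteMeasure μ] {X : ℕ → Ω → ℝ} {c : ℝ≥0}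
    (hX : ∀ j, HasSubgaussianMGF (X j) c μ) {r : ℕ → ℝ} (hr : ∀ j, 0 ≤ r j)
    (hsum : Summable fun j => exp (-r j ^ 2 / (2 * c))) :
    ∀ᵐ ω ∂μ, ∀ᶠ j in atTop, |X j ω| < r j := by
  have htail :
      ∀ j, μ {ω | r j ≤ |X j ω|} ≤ ENNReal.ofReal (2 * exp (-r j ^ 2 / (2 * c))) :=
    fun j => ofReal_measureReal (measure_ne_top μ _) ▸
      ENNReal.ofReal_le_ofReal ((hX j).measureReal_abs_ge_le (hr j))
  have hfinite : ∑' j, μ {ω | r j ≤ |X j ω|} ≠ ∞ :=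
    ne_top_of_le_ne_top (hsum.mul_left 2).tsum_ofReal_ne_top (ENNReal.tsum_le_tsum htail)
  filter_upwards [ae_eventually_notMem hfinite] with ω hω
  exact hω.mono fun j hj => not_le.1 hj

lemma exists_abs_le_mul_of_eventually_le {y ρ : ℕ → ℝ} {c : ℝ} (hρ : ∀ j, 0 < ρ j)
    (h : ∀ᶠ j in atTop, |y j| ≤ c * ρ j) : ∃ M, 0 ≤ M ∧ ∀ j, |y j| ≤ M * ρ j := by
  obtain ⟨M, hM⟩ := (isBoundedUnder_of_eventually_le
    (h.mono fun j hj => (div_le_iff₀ (hρ j)).2 hj)).bddAbove_range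
  exact ⟨max M 0, le_max_right _ _, fun j =>
    (div_le_iff₀ (hρ j)).1 ((hM ⟨j, rfl⟩).trans (le_max_left _ _))⟩

lemma summable_and_tsum_le_of_tsum_ofReal_le {ι : Type*} {f : ι → ℝ} {K : ℝ} (hf : 0 ≤ f)
    (hK : 0 ≤ K) (h : ∑' j, ENNReal.ofReal (f j) ≤ ENNReal.ofReal K) :
    Summable f ∧ ∑' j, f j ≤ K := by
  have hfinset : ∀ u : Finset ι, ∑ j ∈ u, f j ≤ K := fun u =>
    (ENNReal.ofReal_le_ofReal_iff hK).1 <| calc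
      ENNReal.ofReal (∑ j ∈ u, f j) = ∑ j ∈ u, ENNReal.ofReal (f j) :=
        ENNReal.ofReal_sum_of_nonneg fun j _ => hf j
      _ ≤ ∑' j, ENNReal.ofReal (f j) := ENNReal.sum_le_tsum u
      _ ≤ ENNReal.ofReal K := h
  exact ⟨summable_of_sum_le hf hfinset, Real.tsum_le_of_sum_le hf hfinset⟩

lemma summable_abs_mul_and_tsum_le {ι : Type*} {a ρ y : ι → ℝ} {K M : ℝ}
    (hρ : ∀ j, 0 ≤ ρ j) (hK : 0 ≤ K) (hM : 0 ≤ M)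
    (ha : ∑' j, ENNReal.ofReal (ρ j * |a j|) ≤ ENNReal.ofReal K)
    (hy : ∀ j, |y j| ≤ M * ρ j) :
    Summable (fun j => |y j * a j|) ∧ ∑' j, |y j * a j| ≤ M * K := by
  obtain ⟨hsummable, htsum⟩ := summable_and_tsum_le_of_tsum_ofReal_le
    (fun j => mul_nonneg (hρ j) (abs_nonneg (a j))) hK ha
  have hle : ∀ j, |y j * a j| ≤ M * (ρ j * |a j|) := fun j => by
    rw [abs_mul, ← mul_assoc]
    exact mul_le_mul_of_nonneg_right (hy j) (abs_nonneg _)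
  have hsummable' := hsummable.mul_left M
  have hsummable_abs := hsummable'.of_nonneg_of_le (fun j => abs_nonneg _) hle
  refine ⟨hsummable_abs, ?_⟩
  calc ∑' j, |y j * a j|
      ≤ ∑' j, M * (ρ j * |a j|) := hsummable_abs.tsum_le_tsum hle hsummable'
    _ = M * ∑' j, ρ j * |a j| := tsum_mul_left
    _ ≤ M * K := mul_le_mul_of_nonneg_left htsum hM

theorem lognormal_field_as_bounded_general
    {D : Type*} (ψ : ℕ → D → ℝ) (ρ : ℕ → ℝ) (hρ : ∀ j, 0 < ρ j)
    (K : ℝ) (hK : ∀ x, ∑' j, ENNReal.ofReal (ρ j * |ψ j x|) ≤ ENNReal.ofReal K)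
    (hsum : Summable fun j => Real.exp (-ρ j ^ 2))
    {Ω : Type*} [MeasurableSpace Ω] (P : Measure Ω) [IsProbabilityMeasure P]
    (Y : ℕ → Ω → ℝ) (hYmeas : ∀ j, Measurable (Y j))
    (hdist : ∀ j, P.map (Y j) = gaussianReal 0 1) :
    ∀ᵐ ω ∂P, ∃ B : ℝ, ∀ x : D,
      Summable (fun j => |Y j ω * ψ j x|) ∧ ∑' j, |Y j ω * ψ j x| ≤ B := by
  have hY : ∀ j, HasSubgaussianMGF (Y j) 1 P := fun j =>
    (HasSubgaussianMGF.id_map_iff (hYmeas j).aemeasurable).1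
      (hdist j ▸ hasSubgaussianMGF_id_gaussianReal 1)
  have hsum' : Summable fun j => exp (-(2 * ρ j) ^ 2 / (2 * 1)) :=
    hsum.of_nonneg_of_le (fun j => (exp_pos _).le) fun j =>
      exp_le_exp.2 (by nlinarith [sq_nonneg (ρ j)])
  filter_upwards [ae_eventually_abs_lt_of_hasSubgaussianMGF hY
    (fun j => by linarith [hρ j]) hsum'] with ω hω
  obtain ⟨M, hM, hYM⟩ := exists_abs_le_mul_of_eventually_le hρ (hω.mono fun j => le_of_lt)
  exact ⟨M * max K 0, fun x => summable_abs_mul_and_tsum_le (fun j => (hρ j).le)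
    (le_max_right K 0) hM ((hK x).trans (ENNReal.ofReal_le_ofReal (le_max_left K 0))) hYM⟩

/-- if `sup_x ∑_j ρ_j |ψ_j(x)| = K < ∞` and `∑_j exp(−ρ_j²) < ∞`,
and `(Y_j)` are i.i.d. standard Gaussians, then almost surely
`sup_x ∑_j |Y_j ψ_j(x)| < ∞`, the series converging absolutely for every `x`. -/
theorem lognormal_field_as_bounded
    {D : Type*} [Nonempty D] (ψ : ℕ → D → ℝ) (ρ : ℕ → ℝ) (hρ : ∀ j, 0 < ρ j)
    (K : ℝ) (hK : ∀ x, ∑' j, ENNReal.ofReal (ρ j * |ψ j x|) ≤ ENNReal.ofReal K)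
    (hsum : Summable fun j => Real.exp (-ρ j ^ 2))
    {Ω : Type*} [MeasurableSpace Ω] (P : Measure Ω) [IsProbabilityMeasure P]
    (Y : ℕ → Ω → ℝ) (hYmeas : ∀ j, Measurable (Y j))
    (hindep : iIndepFun Y P)
    (hdist : ∀ j, P.map (Y j) = gaussianReal 0 1) :
    ∀ᵐ ω ∂P, ∃ B : ℝ, ∀ x : D,
      Summable (fun j => |Y j ω * ψ j x|) ∧ ∑' j, |Y j ω * ψ j x| ≤ B :=
  lognormal_field_as_bounded_general ψ ρ hρ K hK hsum P Y hYmeas hdist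
end

section
/- Let D be a nonempty set, let (ψ_j)_{j≥1} be real-valued functions on D, and let (ρ_j)_{j≥1} be positive numbers such that sup_{x∈D} ∑_{j≥1} ρ_j |ψ_j(x)| = K < ∞ and ∑_{j≥1} exp(−ρ_j²) < ∞. Let (Y_j)_{j≥1} be independent standard Gaussian random variables and set B := sup_{x∈D} ∑_{j≥1} |Y_j ψ_j(x)| (which is finite almost surely). Then for every k < ∞ one has E[exp(k B)] < ∞. -/
/-!
Put `z_j = |Y_j| / ρ_j`. Since `∑_j ρ_j |ψ_j x| ≤ K`, one has `B ≤ K · sup_j z_j`, so with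
`a = k K` we get `exp (k B) ≤ sup_j exp (a z_j) ≤ exp (2a) + ∑_j exp (a z_j) 1{z_j ≥ 2}`.
On `{|Y_j| ≥ 2ρ_j}` the factor `exp (Y_j² / 4 - ρ_j²) ≥ 1` extracts `exp (-ρ_j²)` from the
`j`-th term, whose expectation is therefore `O (exp (-ρ_j²))` once `ρ_j` is large, and the
resulting series converges.
-/

open MeasureTheory ProbabilityTheory Real Filter
open scoped ENNReal

noncomputable section

lemma lintegral_ofReal_exp_mul_sq_gaussianReal_lt_top {c : ℝ} (hc : c < 1 / 2) :
    ∫⁻ y, ENNReal.ofReal (exp (c * y ^ 2)) ∂gaussianReal 0 1 < ⊤ := by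
  rw [gaussianReal_of_var_ne_zero 0 one_ne_zero,
    lintegral_withDensity_eq_lintegral_mul _ (measurable_gaussianPDF 0 1) (by fun_prop)]
  have hdensity : ∀ y : ℝ, (gaussianPDF 0 1 * fun y => ENNReal.ofReal (exp (c * y ^ 2))) y
      = ENNReal.ofReal ((√(2 * π))⁻¹ * exp (-(1 / 2 - c) * y ^ 2)) := by
    intro y
    rw [Pi.mul_apply, gaussianPDF, ← ENNReal.ofReal_mul (gaussianPDFReal_nonneg 0 1 y),
      gaussianPDFReal_def, mul_assoc, ← exp_add]
    congr 3
    · simp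
    · push_cast; ring
  simp_rw [hdensity]
  exact ((integrable_exp_neg_mul_sq (by linarith)).const_mul _).lintegral_lt_top

def expTail (a r : ℝ) : ℝ → ℝ≥0∞ :=
  {y | 2 * r ≤ |y|}.indicator fun y => ENNReal.ofReal (exp (a * |y| / r))

lemma measurable_expTail (a r : ℝ) : Measurable (expTail a r) :=
  (Measurable.ennreal_ofReal (by fun_prop)).indicator
    (measurableSet_le measurable_const continuous_abs.measurable)

lemma ofReal_exp_le_add_expTail {a r : ℝ} (ha : 0 ≤ a) (hr : 0 < r) (y : ℝ) :
    ENNReal.ofReal (exp (a * |y| / r)) ≤ ENNReal.ofReal (exp (2 * a)) + expTail a r y := by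
  by_cases hy : 2 * r ≤ |y|
  · rw [expTail, Set.indicator_of_mem (by exact hy)]
    exact le_add_self
  · refine le_add_right (ENNReal.ofReal_le_ofReal (exp_le_exp.2 ?_))
    rw [div_le_iff₀ hr]
    nlinarith

/-- On the support `1 ≤ exp (y²/4 - r²)`, and `a|y|/r ≤ 2a²/r² + y²/8`. -/
lemma expTail_le (a : ℝ) {r : ℝ} (hr : 0 ≤ r) (y : ℝ) :
    expTail a r y ≤
      ENNReal.ofReal (exp (2 * a ^ 2 / r ^ 2 - r ^ 2)) * ENNReal.ofReal (exp (3 / 8 * y ^ 2)) := by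
  by_cases hy : 2 * r ≤ |y|
  · rw [expTail, Set.indicator_of_mem (by exact hy), ← ENNReal.ofReal_mul (exp_pos _).le,
      ← exp_add]
    refine ENNReal.ofReal_le_ofReal (exp_le_exp.2 ?_)
    have hamgm : a * |y| / r ≤ 2 * a ^ 2 / r ^ 2 + y ^ 2 / 8 := by
      have hlin : a * |y| / r = a / r * |y| := by ring
      have hquad : 2 * a ^ 2 / r ^ 2 = 2 * (a / r) ^ 2 := by ring
      rw [hlin, hquad]
      nlinarith [sq_nonneg (a / r - |y| / 4), sq_abs y]
    nlinarith [sq_abs y]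
  · rw [expTail, Set.indicator_of_notMem (by exact hy)]
    exact bot_le

lemma summable_exp_div_sq_sub_sq {ρ : ℕ → ℝ} (hsum : Summable fun j => exp (-ρ j ^ 2)) (b : ℝ) :
    Summable fun j => exp (b / ρ j ^ 2 - ρ j ^ 2) := by
  refine Summable.of_norm_bounded_eventually_nat (hsum.mul_left (exp |b|)) ?_
  have hlarge : ∀ᶠ j in atTop, 1 ≤ ρ j ^ 2 := by
    filter_upwards [hsum.tendsto_atTop_zero.eventually_lt_const (exp_pos (-1))] with j hj
    linarith [exp_lt_exp.1 hj]
  filter_upwards [hlarge] with j hj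
  have hb : b / ρ j ^ 2 ≤ |b| := by
    rw [div_le_iff₀ (by linarith)]
    nlinarith [le_abs_self b, abs_nonneg b]
  rw [Real.norm_of_nonneg (exp_pos _).le, ← exp_add]
  exact exp_le_exp.2 (by linarith)

lemma ofReal_exp_toReal_le_iSup {ι : Type*} [Nonempty ι] {x : ι → ℝ} (hx : ∀ i, 0 ≤ x i)
    {b : ℝ≥0∞} (hb : b ≤ ⨆ i, ENNReal.ofReal (x i)) :
    ENNReal.ofReal (exp b.toReal) ≤ ⨆ i, ENNReal.ofReal (exp (x i)) := by
  have hbelow :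
      ∀ s ∈ Set.Iio b.toReal, ENNReal.ofReal (exp s) ≤ ⨆ i, ENNReal.ofReal (exp (x i)) := by
    intro s hs
    obtain ⟨i, hi⟩ : ∃ i, s ≤ x i := by
      rcases lt_or_ge s 0 with hs0 | hs0
      · exact ⟨Classical.arbitrary ι, hs0.le.trans (hx _)⟩
      have hsb : ENNReal.ofReal s < b := by
        rcases eq_or_ne b ⊤ with rfl | hb_top
        · exact ENNReal.ofReal_lt_top
        · exact (ENNReal.ofReal_lt_iff_lt_toReal hs0 hb_top).2 hs
      obtain ⟨i, hi⟩ := lt_iSup_iff.1 (hsb.trans_le hb)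
      exact ⟨i, (ENNReal.ofReal_lt_ofReal_iff'.1 hi).1.le⟩
    exact (ENNReal.ofReal_le_ofReal (exp_le_exp.2 hi)).trans (le_iSup_of_le i le_rfl)
  have hcont : ContinuousAt (fun s => ENNReal.ofReal (exp s)) b.toReal :=
    (ENNReal.continuous_ofReal.comp continuous_exp).continuousAt
  exact le_of_tendsto (hcont.tendsto.mono_left nhdsWithin_le_nhds)
    (eventually_nhdsWithin_of_forall hbelow)

lemma tsum_ofReal_abs_mul_le_iSup_mul {ι : Type*} {ρ : ι → ℝ} (hρ : ∀ j, 0 < ρ j)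
    (y w : ι → ℝ) :
    ∑' j, ENNReal.ofReal |y j * w j| ≤
      (⨆ j, ENNReal.ofReal (|y j| / ρ j)) * ∑' j, ENNReal.ofReal (ρ j * |w j|) := by
  rw [← ENNReal.tsum_mul_left]
  refine ENNReal.tsum_le_tsum fun j => ?_
  have hsplit : |y j * w j| = |y j| / ρ j * (ρ j * |w j|) := by
    have := (hρ j).ne'
    rw [abs_mul]; field_simp
  rw [hsplit, ENNReal.ofReal_mul (div_nonneg (abs_nonneg _) (hρ j).le)]
  exact mul_le_mul_left (le_iSup (fun j => ENNReal.ofReal (|y j| / ρ j)) j) _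

lemma lintegral_tsum_expTail_lt_top {ρ : ℕ → ℝ} (hρ : ∀ j, 0 < ρ j)
    (hsum : Summable fun j => exp (-ρ j ^ 2)) {Ω : Type*} [MeasurableSpace Ω] {P : Measure Ω}
    {Y : ℕ → Ω → ℝ} (hYmeas : ∀ j, Measurable (Y j)) (hdist : ∀ j, P.map (Y j) = gaussianReal 0 1)
    (a : ℝ) :
    ∫⁻ ω, ∑' j, expTail a (ρ j) (Y j ω) ∂P < ⊤ := by
  set G := ∫⁻ y, ENNReal.ofReal (exp (3 / 8 * y ^ 2)) ∂gaussianReal 0 1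
  have hterm : ∀ j, ∫⁻ ω, expTail a (ρ j) (Y j ω) ∂P ≤
      ENNReal.ofReal (exp (2 * a ^ 2 / ρ j ^ 2 - ρ j ^ 2)) * G := by
    intro j
    rw [← lintegral_map (measurable_expTail _ _) (hYmeas j), hdist j,
      ← lintegral_const_mul _ (by fun_prop)]
    exact lintegral_mono fun y => expTail_le a (hρ j).le y
  calc ∫⁻ ω, ∑' j, expTail a (ρ j) (Y j ω) ∂P
      = ∑' j, ∫⁻ ω, expTail a (ρ j) (Y j ω) ∂P :=
        lintegral_tsum fun j => ((measurable_expTail _ _).comp (hYmeas j)).aemeasurable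
    _ ≤ ∑' j, ENNReal.ofReal (exp (2 * a ^ 2 / ρ j ^ 2 - ρ j ^ 2)) * G :=
        ENNReal.tsum_le_tsum hterm
    _ = ENNReal.ofReal (∑' j, exp (2 * a ^ 2 / ρ j ^ 2 - ρ j ^ 2)) * G := by
        rw [ENNReal.tsum_mul_right, ENNReal.ofReal_tsum_of_nonneg (fun j => (exp_pos _).le)
          (summable_exp_div_sq_sub_sq hsum _)]
    _ < ⊤ := ENNReal.mul_lt_top ENNReal.ofReal_lt_top
        (lintegral_ofReal_exp_mul_sq_gaussianReal_lt_top (by norm_num))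

lemma ofReal_exp_mul_toReal_iSup_tsum_le {D : Type*} (ψ : ℕ → D → ℝ) {ρ : ℕ → ℝ}
    (hρ : ∀ j, 0 < ρ j) {K : ℝ}
    (hK : ∀ x, ∑' j, ENNReal.ofReal (ρ j * |ψ j x|) ≤ ENNReal.ofReal K) {k : ℝ} (hk : 0 ≤ k)
    (y : ℕ → ℝ) :
    ENNReal.ofReal (exp (k * (⨆ x, ∑' j, ENNReal.ofReal |y j * ψ j x|).toReal)) ≤
      ENNReal.ofReal (exp (2 * (k * max K 0))) + ∑' j, expTail (k * max K 0) (ρ j) (y j) := by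
  set a := k * max K 0
  have ha : 0 ≤ a := mul_nonneg hk (le_max_right _ _)
  set b := ENNReal.ofReal k * ⨆ x, ∑' j, ENNReal.ofReal |y j * ψ j x|
  have hb : b ≤ ⨆ j, ENNReal.ofReal (a * |y j| / ρ j) := by
    have hsup : (⨆ x, ∑' j, ENNReal.ofReal |y j * ψ j x|) ≤
        (⨆ j, ENNReal.ofReal (|y j| / ρ j)) * ENNReal.ofReal (max K 0) := by
      refine iSup_le fun x => (tsum_ofReal_abs_mul_le_iSup_mul hρ y (fun j => ψ j x)).trans ?_
      rw [ENNReal.ofReal_max, ENNReal.ofReal_zero, max_eq_left zero_le]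
      exact mul_le_mul_right (hK x) _
    refine (mul_le_mul_right hsup _).trans_eq ?_
    rw [ENNReal.iSup_mul, ENNReal.mul_iSup]
    refine iSup_congr fun j => ?_
    rw [← ENNReal.ofReal_mul (div_nonneg (abs_nonneg _) (hρ j).le), ← ENNReal.ofReal_mul hk]
    congr 1
    ring
  have hbk : b.toReal = k * (⨆ x, ∑' j, ENNReal.ofReal |y j * ψ j x|).toReal := by
    rw [ENNReal.toReal_mul, ENNReal.toReal_ofReal hk]
  have hx : ∀ j, 0 ≤ a * |y j| / ρ j := fun j => div_nonneg (mul_nonneg ha (abs_nonneg _)) (hρ j).le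
  rw [← hbk]
  refine (ofReal_exp_toReal_le_iSup hx hb).trans (iSup_le fun j => ?_)
  exact (ofReal_exp_le_add_expTail ha (hρ j) (y j)).trans (add_le_add le_rfl (ENNReal.le_tsum j))

theorem lognormal_field_exp_moments_general
    {D : Type*} (ψ : ℕ → D → ℝ) (ρ : ℕ → ℝ) (hρ : ∀ j, 0 < ρ j)
    (K : ℝ) (hK : ∀ x, ∑' j, ENNReal.ofReal (ρ j * |ψ j x|) ≤ ENNReal.ofReal K)
    (hsum : Summable fun j => Real.exp (-ρ j ^ 2))
    {Ω : Type*} [MeasurableSpace Ω] (P : Measure Ω) [IsProbabilityMeasure P]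
    (Y : ℕ → Ω → ℝ) (hYmeas : ∀ j, Measurable (Y j))
    (hdist : ∀ j, P.map (Y j) = gaussianReal 0 1)
    (B : Ω → ℝ≥0∞)
    (hB : B = fun ω => ⨆ x : D, ∑' j, ENNReal.ofReal |Y j ω * ψ j x|) :
    ∀ k : ℝ, ∫⁻ ω, ENNReal.ofReal (Real.exp (k * (B ω).toReal)) ∂P < ⊤ := by
  intro k
  subst hB
  set a := max k 0 * max K 0
  have hpointwise : ∀ ω,
      ENNReal.ofReal (exp (k * (⨆ x, ∑' j, ENNReal.ofReal |Y j ω * ψ j x|).toReal)) ≤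
        ENNReal.ofReal (exp (2 * a)) + ∑' j, expTail a (ρ j) (Y j ω) := fun ω =>
    (ENNReal.ofReal_le_ofReal (exp_le_exp.2
      (mul_le_mul_of_nonneg_right (le_max_left k 0) ENNReal.toReal_nonneg))).trans
      (ofReal_exp_mul_toReal_iSup_tsum_le ψ hρ hK (le_max_right k 0) fun j => Y j ω)
  refine (lintegral_mono hpointwise).trans_lt ?_
  rw [lintegral_add_left measurable_const, lintegral_const, measure_univ, mul_one]
  exact ENNReal.add_lt_top.2 ⟨ENNReal.ofReal_lt_top,
    lintegral_tsum_expTail_lt_top hρ hsum hYmeas hdist a⟩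

/-- under the assumptions of Statement 10, with
`B := sup_x ∑_j |Y_j ψ_j(x)|` (finite almost surely), every exponential moment
of `B` is finite: `E[exp(k B)] < ∞` for all `k`. -/
theorem lognormal_field_exp_moments
    {D : Type*} [Nonempty D] (ψ : ℕ → D → ℝ) (ρ : ℕ → ℝ) (hρ : ∀ j, 0 < ρ j)
    (K : ℝ) (hK : ∀ x, ∑' j, ENNReal.ofReal (ρ j * |ψ j x|) ≤ ENNReal.ofReal K)
    (hsum : Summable fun j => Real.exp (-ρ j ^ 2))
    {Ω : Type*} [MeasurableSpace Ω] (P : Measure Ω) [IsProbabilityMeasure P]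
    (Y : ℕ → Ω → ℝ) (hYmeas : ∀ j, Measurable (Y j))
    (hindep : iIndepFun Y P)
    (hdist : ∀ j, P.map (Y j) = gaussianReal 0 1)
    (B : Ω → ℝ≥0∞)
    (hB : B = fun ω => ⨆ x : D, ∑' j, ENNReal.ofReal |Y j ω * ψ j x|) :
    ∀ k : ℝ, ∫⁻ ω, ENNReal.ofReal (Real.exp (k * (B ω).toReal)) ∂P < ⊤ :=
  lognormal_field_exp_moments_general ψ ρ hρ K hK hsum P Y hYmeas hdist B hB

end
end
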